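/- For the simple random walk on ℤ₊ reflected at 0 with p > 1/2 and α < p/q, the function f(i) = E_i α^{ℓ(0)} satisfies f(i) = 1 − (q/p)^i + (q/p)^i f(0) for every i ≥ 1, where f(0) = α(1−q/p)/(1−αq/p); in particular f(i) → 1 as i → ∞. -/

import Mathlib

open MeasureTheory Filter Topology
open scoped ENNReal NNReal

structure MC where
  μ : ℕ → Measure (ℕ → ℕ)
  prob : ∀ i, IsProbabilityMeasure (μ i)
  start : ∀ i, μ i {ω | ω 0 = i} = 1
  P : ℕ → ℕ → ℝ≥0∞
  P_sum : ∀ i, ∑' j, P i j = 1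
  markov : ∀ i, (μ i).map (fun ω n => ω (n + 1)) = Measure.sum fun j => P i j • μ j

noncomputable def qt (Q : ℕ → ℕ → ℝ≥0∞) (i : ℕ) : ℝ≥0∞ := ∑' j, Q i j

noncomputable def fQ (Q : ℕ → ℕ → ℝ≥0∞) (X : MC) (i : ℕ) : ℝ≥0∞ :=
  ∫⁻ ω, ∏' n, qt Q (ω n) ∂(X.μ i)

def condC (Q : ℕ → ℕ → ℝ≥0∞) (X : MC) : Prop :=
  ∀ i, (∫⁻ ω, ∏' n, max (qt Q (ω n)) 1 ∂(X.μ i)) < ∞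

noncomputable def Qpow (Q : ℕ → ℕ → ℝ≥0∞) : ℕ → ℕ → ℕ → ℝ≥0∞
  | 0 => fun i j => if i = j then 1 else 0
  | n + 1 => fun i j => ∑' k, Q i k * Qpow Q n k j

def Irred (Q : ℕ → ℕ → ℝ≥0∞) : Prop := ∀ i j, ∃ n, 0 < Qpow Q n i j

noncomputable def locTime (j : ℕ) (ω : ℕ → ℕ) : ℝ≥0∞ := ∑' n, if ω n = j then 1 else 0

noncomputable def locExp (γ : ℝ) (j : ℕ) (ω : ℕ → ℕ) : ℝ≥0∞ :=
  ∏' n, if ω n = j then ENNReal.ofReal (Real.exp γ) else 1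

noncomputable def deltaQ (Q : ℕ → ℕ → ℝ≥0∞) (j : ℕ) : ℝ := Real.log (qt Q j).toReal

noncomputable def jumpP (X : MC) (i : ℕ) (j : ℤ) : ℝ≥0∞ :=
  if 0 ≤ (i : ℤ) + j then X.P i ((i : ℤ) + j).toNat else 0

/-!
Truncating the product at time `N` gives `F_N(i) = E_i ∏_{n<N} g(X_n)` with `g(0) = α` and
`g = 1` elsewhere. The Markov property gives `F_{N+1} = T F_N` for the operator
`(T h)(0) = α h(1)`, `(T h)(i) = p h(i+1) + q h(i-1)`. Since all factors of the product lie on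
the same side of `1`, `F_N` is monotone in `N`, so `f = lim F_N` is a fixed point of `T`, and by
induction it lies between `1` and the explicit fixed point `φ(i) = 1 - r^i + r^i φ(0)`, `r = q/p`.
Fixed points of `T` are determined by their value at `0`, hence are multiples of `φ`; as
`φ(i) → 1`, the two bounds force the multiple to be `1`.
-/

open Finset

theorem ENNReal.tendsto_prod_range_tprod_of_le_one {f : ℕ → ℝ≥0∞} (hf : ∀ n, f n ≤ 1) :
    Tendsto (fun N => ∏ n ∈ range N, f n) atTop (𝓝 (∏' n, f n)) :=
  (hasProd_of_isGLB_of_le_one _ hf isGLB_iInf).multipliable.tendsto_prod_tprod_nat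

theorem ENNReal.tendsto_prod_range_tprod_of_one_le {f : ℕ → ℝ≥0∞} (hf : ∀ n, 1 ≤ f n) :
    Tendsto (fun N => ∏ n ∈ range N, f n) atTop (𝓝 (∏' n, f n)) :=
  (hasProd_of_isLUB_of_one_le _ hf isLUB_iSup).multipliable.tendsto_prod_tprod_nat

/-- `h ↦ g • P h` for the walk reflected at `0`, with the weight `g` equal to `a` at `0` and to
`1` elsewhere. -/
def weightedStep {R : Type*} [Semiring R] (a p q : R) (h : ℕ → R) : ℕ → R
  | 0 => a * h 1
  | k + 1 => p * h (k + 2) + q * h k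

theorem weightedStep_mono (a p q : ℝ≥0∞) : Monotone (weightedStep a p q) := by
  intro h h' hh i
  cases i with
  | zero => exact mul_le_mul_right (hh 1) a
  | succ k => exact add_le_add (mul_le_mul_right (hh _) p) (mul_le_mul_right (hh _) q)

theorem ofReal_weightedStep {a p q : ℝ} (ha : 0 ≤ a) (hp : 0 ≤ p) (hq : 0 ≤ q) {v : ℕ → ℝ}
    (hv : ∀ j, 0 ≤ v j) (i : ℕ) :
    ENNReal.ofReal (weightedStep a p q v i) =
      weightedStep (ENNReal.ofReal a) (ENNReal.ofReal p) (ENNReal.ofReal q)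
        (fun j => ENNReal.ofReal (v j)) i := by
  cases i with
  | zero => exact ENNReal.ofReal_mul ha
  | succ k =>
    rw [weightedStep, weightedStep, ENNReal.ofReal_add (mul_nonneg hp (hv _))
      (mul_nonneg hq (hv _)), ENNReal.ofReal_mul hp, ENNReal.ofReal_mul hq]

theorem toReal_weightedStep {a p q : ℝ≥0∞} (hp : p ≠ ∞) (hq : q ≠ ∞) {u : ℕ → ℝ≥0∞}
    (hu : ∀ j, u j ≠ ∞) (i : ℕ) :
    (weightedStep a p q u i).toReal =
      weightedStep a.toReal p.toReal q.toReal (fun j => (u j).toReal) i := by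
  cases i with
  | zero => exact ENNReal.toReal_mul
  | succ k =>
    rw [weightedStep, weightedStep, ENNReal.toReal_add (ENNReal.mul_ne_top hp (hu _))
      (ENNReal.mul_ne_top hq (hu _)), ENNReal.toReal_mul, ENNReal.toReal_mul]

theorem tendsto_weightedStep {ι : Type*} {l : Filter ι} {a p q : ℝ≥0∞} (ha : a ≠ ∞)
    (hp : p ≠ ∞) (hq : q ≠ ∞) {h : ι → ℕ → ℝ≥0∞} {u : ℕ → ℝ≥0∞}
    (hu : ∀ j, Tendsto (fun N => h N j) l (𝓝 (u j))) (i : ℕ) :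
    Tendsto (fun N => weightedStep a p q (h N) i) l (𝓝 (weightedStep a p q u i)) := by
  cases i with
  | zero => exact ENNReal.Tendsto.const_mul (hu 1) (Or.inr ha)
  | succ k =>
    exact (ENNReal.Tendsto.const_mul (hu _) (Or.inr hp)).add
      (ENNReal.Tendsto.const_mul (hu _) (Or.inr hq))

theorem weightedStep_fixedPoint_mul_eq {K : Type*} [Field K] {a p q : K} (ha : a ≠ 0)
    (hp : p ≠ 0) {v c : ℕ → K} (hv : weightedStep a p q v = v) (hc : weightedStep a p q c = c)
    (k : ℕ) : v k * c 0 = v 0 * c k := by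
  have hv0 : a * v 1 = v 0 := congrFun hv 0
  have hc0 : a * c 1 = c 0 := congrFun hc 0
  suffices ∀ k, v k * c 0 = v 0 * c k ∧ v (k + 1) * c 0 = v 0 * c (k + 1) from (this k).1
  intro k
  induction k with
  | zero =>
    refine ⟨rfl, mul_left_cancel₀ ha ?_⟩
    rw [← hv0, ← hc0]
    ring
  | succ k ih =>
    refine ⟨ih.2, mul_left_cancel₀ hp ?_⟩
    have hvk : p * v (k + 2) + q * v k = v (k + 1) := congrFun hv (k + 1)
    have hck : p * c (k + 2) + q * c k = c (k + 1) := congrFun hc (k + 1)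
    linear_combination c 0 * hvk - v 0 * hck + ih.2 - q * ih.1

noncomputable def localTimePGF (p q α : ℝ) (i : ℕ) : ℝ :=
  1 - (q / p) ^ i + (q / p) ^ i * (α * (1 - q / p) / (1 - α * q / p))

section localTimePGF

variable {p q α : ℝ} (hq : 0 < q) (hqp : q < p) (hαq : α * q < p)
include hq hqp hαq

omit hαq in
theorem div_pos_and_div_lt_one : 0 < q / p ∧ q / p < 1 :=
  ⟨div_pos hq (hq.trans hqp), (div_lt_one (hq.trans hqp)).2 hqp⟩

theorem one_sub_mul_div_pos : 0 < 1 - α * q / p := by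
  rw [sub_pos, div_lt_one (hq.trans hqp)]
  exact hαq

theorem localTimePGF_eq :
    localTimePGF p q α = fun i => 1 - (q / p) ^ i * ((1 - α) / (1 - α * q / p)) := by
  have := (one_sub_mul_div_pos hq hqp hαq).ne'
  have hc : α * (1 - q / p) / (1 - α * q / p) = 1 - (1 - α) / (1 - α * q / p) := by
    field_simp
    ring
  funext i
  rw [localTimePGF, hc]
  ring

theorem weightedStep_localTimePGF (hpq : p + q = 1) :
    weightedStep α p q (localTimePGF p q α) = localTimePGF p q α := by
  have hd : (1 - α) / (1 - α * q / p) * (1 - α * (q / p)) = 1 - α := by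
    rw [← mul_div_assoc]
    exact div_mul_cancel₀ _ (one_sub_mul_div_pos hq hqp hαq).ne'
  have hr : p * (q / p) ^ 2 + q = q / p := by
    have : p ≠ 0 := (hq.trans hqp).ne'
    field_simp
    linear_combination hpq
  rw [localTimePGF_eq hq hqp hαq]
  generalize q / p = r at hd hr
  generalize (1 - α) / (1 - α * q / p) = d at hd
  funext i
  cases i with
  | zero =>
    rw [weightedStep]
    linear_combination hd
  | succ k =>
    rw [weightedStep]
    linear_combination (-(r ^ k * d)) * hr + hpq

theorem localTimePGF_zero_pos (hα : 0 < α) : 0 < localTimePGF p q α 0 := by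
  have hr := div_pos_and_div_lt_one hq hqp
  simpa [localTimePGF] using
    div_pos (mul_pos hα (sub_pos.2 hr.2)) (one_sub_mul_div_pos hq hqp hαq)

theorem localTimePGF_le_one (hα : α ≤ 1) (i : ℕ) : localTimePGF p q α i ≤ 1 := by
  have hr := div_pos_and_div_lt_one hq hqp
  rw [localTimePGF_eq hq hqp hαq, sub_le_self_iff]
  exact mul_nonneg (pow_nonneg hr.1.le i)
    (div_nonneg (sub_nonneg.2 hα) (one_sub_mul_div_pos hq hqp hαq).le)

theorem one_le_localTimePGF (hα : 1 ≤ α) (i : ℕ) : 1 ≤ localTimePGF p q α i := by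
  have hr := div_pos_and_div_lt_one hq hqp
  rw [localTimePGF_eq hq hqp hαq, le_sub_self_iff]
  exact mul_nonpos_of_nonneg_of_nonpos (pow_nonneg hr.1.le i)
    (div_nonpos_of_nonpos_of_nonneg (sub_nonpos.2 hα) (one_sub_mul_div_pos hq hqp hαq).le)

theorem localTimePGF_nonneg (hα : 0 < α) (i : ℕ) : 0 ≤ localTimePGF p q α i := by
  rcases le_total α 1 with hα1 | hα1
  · have hr := div_pos_and_div_lt_one hq hqp
    have hd : 0 ≤ (1 - α) / (1 - α * q / p) :=
      div_nonneg (sub_nonneg.2 hα1) (one_sub_mul_div_pos hq hqp hαq).le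
    have h0 := localTimePGF_zero_pos hq hqp hαq hα
    have hri : (q / p) ^ i ≤ 1 := pow_le_one₀ hr.1.le hr.2.le
    rw [localTimePGF_eq hq hqp hαq] at h0 ⊢
    simp only [pow_zero, one_mul] at h0 ⊢
    nlinarith
  · exact zero_le_one.trans (one_le_localTimePGF hq hqp hαq hα1 i)

theorem ofReal_localTimePGF (hα : 0 < α) (i : ℕ) :
    ENNReal.ofReal (localTimePGF p q α i) = ENNReal.ofReal (1 - (q / p) ^ i) +
      ENNReal.ofReal ((q / p) ^ i) * ENNReal.ofReal (localTimePGF p q α 0) := by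
  have hr := div_pos_and_div_lt_one hq hqp
  have hri : (q / p) ^ i ≤ 1 := pow_le_one₀ hr.1.le hr.2.le
  have h0 := (localTimePGF_zero_pos hq hqp hαq hα).le
  rw [← ENNReal.ofReal_mul (pow_nonneg hr.1.le i),
    ← ENNReal.ofReal_add (sub_nonneg.2 hri) (mul_nonneg (pow_nonneg hr.1.le i) h0)]
  simp [localTimePGF]

theorem tendsto_localTimePGF : Tendsto (localTimePGF p q α) atTop (𝓝 1) := by
  have hr := div_pos_and_div_lt_one hq hqp
  rw [localTimePGF_eq hq hqp hαq]
  simpa using ((tendsto_pow_atTop_nhds_zero_of_lt_one hr.1.le hr.2).mul_const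
    ((1 - α) / (1 - α * q / p))).const_sub 1

variable (hpq : p + q = 1) (hα : 0 < α)
include hpq hα

theorem weightedStep_ofReal_localTimePGF :
    weightedStep (ENNReal.ofReal α) (ENNReal.ofReal p) (ENNReal.ofReal q)
        (fun i => ENNReal.ofReal (localTimePGF p q α i)) =
      fun i => ENNReal.ofReal (localTimePGF p q α i) := by
  funext i
  rw [← ofReal_weightedStep hα.le (hq.trans hqp).le hq.le (localTimePGF_nonneg hq hqp hαq hα),
    weightedStep_localTimePGF hq hqp hαq hpq]

theorem eq_localTimePGF_of_weightedStep_eq {u : ℕ → ℝ≥0∞}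
    (hu : weightedStep (ENNReal.ofReal α) (ENNReal.ofReal p) (ENNReal.ofReal q) u = u)
    (hlo : ∀ i, ENNReal.ofReal (min 1 (localTimePGF p q α i)) ≤ u i)
    (hhi : ∀ i, u i ≤ ENNReal.ofReal (max 1 (localTimePGF p q α i))) :
    u = fun i => ENNReal.ofReal (localTimePGF p q α i) := by
  set φ := localTimePGF p q α
  have hfin (i : ℕ) : u i ≠ ∞ := ne_top_of_le_ne_top ENNReal.ofReal_ne_top (hhi i)
  set v : ℕ → ℝ := fun i => (u i).toReal
  have hv : weightedStep α p q v = v := by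
    funext i
    have := congrArg ENNReal.toReal (congrFun hu i)
    rwa [toReal_weightedStep ENNReal.ofReal_ne_top ENNReal.ofReal_ne_top hfin,
      ENNReal.toReal_ofReal hα.le, ENNReal.toReal_ofReal (hq.trans hqp).le,
      ENNReal.toReal_ofReal hq.le] at this
  have hscale (k : ℕ) : v k * φ 0 = v 0 * φ k :=
    weightedStep_fixedPoint_mul_eq hα.ne' (hq.trans hqp).ne' hv
      (weightedStep_localTimePGF hq hqp hαq hpq) k
  have hφ := tendsto_localTimePGF hq hqp hαq
  have hv_tendsto : Tendsto v atTop (𝓝 1) := by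
    refine tendsto_of_tendsto_of_tendsto_of_le_of_le
      (by simpa using (tendsto_const_nhds (x := (1 : ℝ))).min hφ)
      (by simpa using (tendsto_const_nhds (x := (1 : ℝ))).max hφ) (fun i => ?_) (fun i => ?_)
    · exact (ENNReal.ofReal_le_iff_le_toReal (hfin i)).1 (hlo i)
    · exact ENNReal.toReal_le_of_le_ofReal (zero_le_one.trans (le_max_left _ _)) (hhi i)
  have hv0 : v 0 = φ 0 := by
    refine tendsto_nhds_unique (f := fun k => v k * φ 0) (l := atTop) ?_ ?_
    · simpa [hscale] using hφ.const_mul (v 0)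
    · simpa using hv_tendsto.mul_const (φ 0)
  funext i
  rw [← ENNReal.ofReal_toReal (hfin i)]
  congr 1
  have := hscale i
  rw [hv0, mul_comm (φ 0)] at this
  exact mul_right_cancel₀ (localTimePGF_zero_pos hq hqp hαq hα).ne' this

end localTimePGF

namespace MC

variable (X : MC)

instance (i : ℕ) : IsProbabilityMeasure (X.μ i) := X.prob i

theorem ae_start (i : ℕ) : ∀ᵐ ω ∂X.μ i, ω 0 = i :=
  (prob_compl_eq_zero_iff (measurableSet_eq_fun (measurable_pi_apply 0) measurable_const)).2
    (X.start i)

theorem lintegral_comp_shift (i : ℕ) {F : (ℕ → ℕ) → ℝ≥0∞} (hF : Measurable F) :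
    ∫⁻ ω, F (fun n => ω (n + 1)) ∂X.μ i = ∑' j, X.P i j * ∫⁻ ω, F ω ∂X.μ j := by
  have hshift : Measurable fun (ω : ℕ → ℕ) (n : ℕ) => ω (n + 1) :=
    measurable_pi_lambda _ fun n => measurable_pi_apply (n + 1)
  rw [← lintegral_map hF hshift, X.markov i, lintegral_sum_measure]
  simp only [lintegral_smul_measure, smul_eq_mul]

theorem P_eq_zero_of_sum_eq_one {i : ℕ} {s : Finset ℕ} (hs : ∑ j ∈ s, X.P i j = 1) {j : ℕ}
    (hj : j ∉ s) : X.P i j = 0 := by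
  have h := ENNReal.sum_le_tsum (f := X.P i) (insert j s)
  rw [sum_insert hj, hs, X.P_sum i] at h
  exact le_antisymm ((ENNReal.add_le_add_iff_right ENNReal.one_ne_top).1
    (h.trans_eq (zero_add 1).symm)) zero_le

theorem tsum_P_mul_eq_sum {i : ℕ} {s : Finset ℕ} (hs : ∑ j ∈ s, X.P i j = 1) (x : ℕ → ℝ≥0∞) :
    ∑' j, X.P i j * x j = ∑ j ∈ s, X.P i j * x j :=
  tsum_eq_sum fun j hj => by rw [X.P_eq_zero_of_sum_eq_one hs hj, zero_mul]

noncomputable def expectProd (g : ℕ → ℝ≥0∞) (N i : ℕ) : ℝ≥0∞ :=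
  ∫⁻ ω, ∏ n ∈ range N, g (ω n) ∂X.μ i

theorem expectProd_zero (g : ℕ → ℝ≥0∞) (i : ℕ) : X.expectProd g 0 i = 1 := by
  simp [expectProd]

theorem expectProd_succ (g : ℕ → ℝ≥0∞) (N i : ℕ) :
    X.expectProd g (N + 1) i = g i * ∑' j, X.P i j * X.expectProd g N j := by
  have hF : Measurable fun ω : ℕ → ℕ => ∏ n ∈ range N, g (ω n) := by fun_prop
  calc X.expectProd g (N + 1) i
      = ∫⁻ ω, g i * ∏ n ∈ range N, g (ω (n + 1)) ∂X.μ i := by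
        refine lintegral_congr_ae ((X.ae_start i).mono fun ω hω => ?_)
        simp only [prod_range_succ', hω, mul_comm]
    _ = g i * ∑' j, X.P i j * X.expectProd g N j := by
        rw [lintegral_const_mul _ (by fun_prop), X.lintegral_comp_shift i hF]
        rfl

theorem expectProd_le_one {g : ℕ → ℝ≥0∞} (hg : ∀ j, g j ≤ 1) (N i : ℕ) :
    X.expectProd g N i ≤ 1 :=
  (lintegral_mono fun ω => prod_le_one' fun n _ => hg (ω n)).trans_eq (by simp)

theorem one_le_expectProd {g : ℕ → ℝ≥0∞} (hg : ∀ j, 1 ≤ g j) (N i : ℕ) :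
    1 ≤ X.expectProd g N i :=
  (by simp : (1 : ℝ≥0∞) = ∫⁻ _, 1 ∂X.μ i).trans_le
    (lintegral_mono fun ω => one_le_prod' fun n _ => hg (ω n))

theorem tendsto_expectProd {g : ℕ → ℝ≥0∞} (hg : (∀ j, g j ≤ 1) ∨ ∀ j, 1 ≤ g j) (i : ℕ) :
    Tendsto (fun N => X.expectProd g N i) atTop (𝓝 (∫⁻ ω, ∏' n, g (ω n) ∂X.μ i)) := by
  have hmeas (N : ℕ) : AEMeasurable (fun ω : ℕ → ℕ => ∏ n ∈ range N, g (ω n)) (X.μ i) :=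
    (by fun_prop : Measurable _).aemeasurable
  rcases hg with hg | hg
  · refine lintegral_tendsto_of_tendsto_of_antitone hmeas (ae_of_all _ fun ω => ?_) (by simp)
      (ae_of_all _ fun ω => ENNReal.tendsto_prod_range_tprod_of_le_one fun n => hg (ω n))
    exact antitone_nat_of_succ_le fun N => by
      simpa [prod_range_succ] using mul_le_of_le_one_right' (hg (ω N))
  · refine lintegral_tendsto_of_tendsto_of_monotone hmeas (ae_of_all _ fun ω => ?_)
      (ae_of_all _ fun ω => ENNReal.tendsto_prod_range_tprod_of_one_le fun n => hg (ω n))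
    exact monotone_nat_of_le_succ fun N => by
      simpa [prod_range_succ] using le_mul_of_one_le_right' (hg (ω N))

theorem expectProd_succ_eq_weightedStep {p q : ℝ} (hp : 0 ≤ p) (hq : 0 ≤ q) (hpq : p + q = 1)
    (h0 : X.P 0 1 = 1)
    (hup : ∀ i : ℕ, 1 ≤ i → X.P i (i + 1) = ENNReal.ofReal p)
    (hdn : ∀ i : ℕ, 1 ≤ i → X.P i (i - 1) = ENNReal.ofReal q)
    {g : ℕ → ℝ≥0∞} (hg : ∀ k, g (k + 1) = 1) (N : ℕ) :
    X.expectProd g (N + 1) =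
      weightedStep (g 0) (ENNReal.ofReal p) (ENNReal.ofReal q) (X.expectProd g N) := by
  funext i
  rw [expectProd_succ]
  cases i with
  | zero =>
    rw [X.tsum_P_mul_eq_sum (s := {1}) (by simpa using h0)]
    simp [h0, weightedStep]
  | succ k =>
    have hupk : X.P (k + 1) (k + 2) = ENNReal.ofReal p := hup (k + 1) k.succ_pos
    have hdnk : X.P (k + 1) k = ENNReal.ofReal q := hdn (k + 1) k.succ_pos
    have hs : ∑ j ∈ {k + 2, k}, X.P (k + 1) j = 1 := by
      rw [sum_pair (by omega), hupk, hdnk, ← ENNReal.ofReal_add hp hq, hpq, ENNReal.ofReal_one]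
    rw [X.tsum_P_mul_eq_sum hs, sum_pair (by omega), hupk, hdnk, hg, one_mul]
    rfl

end MC

noncomputable def localTimeWeight (α : ℝ) (j : ℕ) : ℝ≥0∞ :=
  if j = 0 then ENNReal.ofReal α else 1

theorem localTimeWeight_le_one {α : ℝ} (hα : α ≤ 1) (j : ℕ) : localTimeWeight α j ≤ 1 := by
  unfold localTimeWeight
  split_ifs
  exacts [ENNReal.ofReal_le_one.2 hα, le_rfl]

theorem one_le_localTimeWeight {α : ℝ} (hα : 1 ≤ α) (j : ℕ) : 1 ≤ localTimeWeight α j := by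
  unfold localTimeWeight
  split_ifs
  exacts [ENNReal.one_le_ofReal.2 hα, le_rfl]

namespace MC

variable (X : MC) {p q α : ℝ} (hq : 0 < q) (hqp : q < p) (hαq : α * q < p) (hpq : p + q = 1)
  (hα : 0 < α) (h0 : X.P 0 1 = 1)
  (hup : ∀ i : ℕ, 1 ≤ i → X.P i (i + 1) = ENNReal.ofReal p)
  (hdn : ∀ i : ℕ, 1 ≤ i → X.P i (i - 1) = ENNReal.ofReal q)
include hq hqp hpq h0 hup hdn

theorem expectProd_localTimeWeight_succ (N : ℕ) :
    X.expectProd (localTimeWeight α) (N + 1) =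
      weightedStep (ENNReal.ofReal α) (ENNReal.ofReal p) (ENNReal.ofReal q)
        (X.expectProd (localTimeWeight α) N) :=
  X.expectProd_succ_eq_weightedStep (hq.trans hqp).le hq.le hpq h0 hup hdn
    (fun k => if_neg k.succ_ne_zero) N

include hαq hα

theorem expectProd_localTimeWeight_bounds (N i : ℕ) :
    ENNReal.ofReal (min 1 (localTimePGF p q α i)) ≤ X.expectProd (localTimeWeight α) N i ∧
      X.expectProd (localTimeWeight α) N i ≤ ENNReal.ofReal (max 1 (localTimePGF p q α i)) := by
  set c : ℕ → ℝ≥0∞ := fun i => ENNReal.ofReal (localTimePGF p q α i)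
  have hc := weightedStep_ofReal_localTimePGF hq hqp hαq hpq hα
  have hstep := X.expectProd_localTimeWeight_succ (α := α) hq hqp hpq h0 hup hdn
  have hmono := weightedStep_mono (ENNReal.ofReal α) (ENNReal.ofReal p) (ENNReal.ofReal q)
  rcases le_total α 1 with hα1 | hα1
  · have hφ := localTimePGF_le_one hq hqp hαq hα1
    rw [min_eq_right (hφ i), max_eq_left (hφ i), ENNReal.ofReal_one]
    refine ⟨?_, X.expectProd_le_one (localTimeWeight_le_one hα1) N i⟩
    refine hmono.seq_le_seq N (x := fun _ => c) (fun j => ?_) (fun _ _ => hc.ge)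
      (fun k _ => (hstep k).ge) i
    rw [expectProd_zero]
    exact ENNReal.ofReal_le_one.2 (hφ j)
  · have hφ := one_le_localTimePGF hq hqp hαq hα1
    rw [min_eq_left (hφ i), max_eq_right (hφ i), ENNReal.ofReal_one]
    refine ⟨X.one_le_expectProd (one_le_localTimeWeight hα1) N i, ?_⟩
    refine hmono.seq_le_seq N (y := fun _ => c) (fun j => ?_) (fun k _ => (hstep k).le)
      (fun _ _ => hc.le) i
    rw [expectProd_zero]
    exact ENNReal.one_le_ofReal.2 (hφ j)

theorem lintegral_tprod_localTimeWeight (i : ℕ) :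
    ∫⁻ ω, ∏' n, localTimeWeight α (ω n) ∂X.μ i = ENNReal.ofReal (localTimePGF p q α i) := by
  have hstep := X.expectProd_localTimeWeight_succ (α := α) hq hqp hpq h0 hup hdn
  have hbounds := X.expectProd_localTimeWeight_bounds hq hqp hαq hpq hα h0 hup hdn
  have hlim :=
    X.tendsto_expectProd ((le_total α 1).imp localTimeWeight_le_one one_le_localTimeWeight)
  have hfix : weightedStep (ENNReal.ofReal α) (ENNReal.ofReal p) (ENNReal.ofReal q)
        (fun j => ∫⁻ ω, ∏' n, localTimeWeight α (ω n) ∂X.μ j) =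
      fun j => ∫⁻ ω, ∏' n, localTimeWeight α (ω n) ∂X.μ j := by
    funext j
    refine tendsto_nhds_unique ?_ ((hlim j).comp (tendsto_add_atTop_nat 1))
    simp only [Function.comp_def, hstep]
    exact tendsto_weightedStep ENNReal.ofReal_ne_top ENNReal.ofReal_ne_top
      ENNReal.ofReal_ne_top hlim j
  exact congrFun (eq_localTimePGF_of_weightedStep_eq hq hqp hαq hpq hα hfix
    (fun j => ge_of_tendsto' (hlim j) fun N => (hbounds N j).1)
    (fun j => le_of_tendsto' (hlim j) fun N => (hbounds N j).2)) i

end MC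

theorem stmt7_general (X : MC) (p q α : ℝ) (hp : 1/2 < p) (hq : q = 1 - p)
    (hα : 0 < α) (hαlt : α < p / q)
    (h0 : X.P 0 1 = 1)
    (hup : ∀ i : ℕ, 1 ≤ i → X.P i (i + 1) = ENNReal.ofReal p)
    (hdn : ∀ i : ℕ, 1 ≤ i → X.P i (i - 1) = ENNReal.ofReal q)
    (f : ℕ → ℝ≥0∞)
    (hf : ∀ i, f i = ∫⁻ ω, ∏' n, (if ω n = 0 then ENNReal.ofReal α else 1) ∂(X.μ i)) :
    f 0 = ENNReal.ofReal (α * (1 - q / p) / (1 - α * q / p)) ∧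
    (∀ i : ℕ, 1 ≤ i →
      f i = ENNReal.ofReal (1 - (q / p) ^ i) + ENNReal.ofReal ((q / p) ^ i) * f 0) ∧
    Tendsto f atTop (𝓝 1) := by
  have hq0 : 0 < q := by
    by_contra! hq0
    linarith [div_nonpos_of_nonneg_of_nonpos (by linarith : (0 : ℝ) ≤ p) hq0]
  have hqp : q < p := by linarith
  have hαq : α * q < p := (lt_div_iff₀ hq0).1 hαlt
  have hpq : p + q = 1 := by linarith
  have hf' : f = fun i => ENNReal.ofReal (localTimePGF p q α i) :=
    funext fun i =>
      (hf i).trans (X.lintegral_tprod_localTimeWeight hq0 hqp hαq hpq hα h0 hup hdn i)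
  subst hf'
  refine ⟨by simp [localTimePGF], fun i _ => ofReal_localTimePGF hq0 hqp hαq hα i, ?_⟩
  simpa using ENNReal.tendsto_ofReal (tendsto_localTimePGF hq0 hqp hαq)

theorem stmt7 (X : MC) (p q α : ℝ) (hp : 1/2 < p) (hp1 : p ≤ 1) (hq : q = 1 - p)
    (hα : 0 < α) (hαlt : α < p / q)
    (h0 : X.P 0 1 = 1)
    (hup : ∀ i : ℕ, 1 ≤ i → X.P i (i + 1) = ENNReal.ofReal p)
    (hdn : ∀ i : ℕ, 1 ≤ i → X.P i (i - 1) = ENNReal.ofReal q)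
    (f : ℕ → ℝ≥0∞)
    (hf : ∀ i, f i = ∫⁻ ω, ∏' n, (if ω n = 0 then ENNReal.ofReal α else 1) ∂(X.μ i)) :
    f 0 = ENNReal.ofReal (α * (1 - q / p) / (1 - α * q / p)) ∧
    (∀ i : ℕ, 1 ≤ i →
      f i = ENNReal.ofReal (1 - (q / p) ^ i) + ENNReal.ofReal ((q / p) ^ i) * f 0) ∧
    Tendsto f atTop (𝓝 1) :=
  stmt7_general X p q α hp hq hα hαlt h0 hup hdn f hf
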